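/- Let X be a real or complex Banach space with the alternative Daugavet property whose closed unit ball B_X is an SCD set. Then X is lush: for every x, y in the unit sphere of X and every ε > 0, there is x* in the unit sphere of X* such that Re x*(x) > 1 − ε and the distance from y to the convex hull of the set {θ·z : |θ| = 1, z ∈ B_X, Re x*(z) > 1 − ε} is less than ε. -/

import Mathlib

open Bornology Metric Topology

/-- The slice of a set `A` determined by the functional `f` and `ε`:
`S(A,f,ε) = {x ∈ A | Re f(x) > sup_{a ∈ A} Re f(a) - ε}`. -/
def Slice (𝕜 : Type*) [RCLike 𝕜] {X : Type*} [SeminormedAddCommGroup X] [NormedSpace 𝕜 X]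
    (A : Set X) (f : X →L[𝕜] 𝕜) (ε : ℝ) : Set X :=
  {x ∈ A | sSup ((fun a => RCLike.re (f a)) '' A) - ε < RCLike.re (f x)}

/-- `S` is a slice of `A`. -/
def IsSlice (𝕜 : Type*) [RCLike 𝕜] {X : Type*} [SeminormedAddCommGroup X] [NormedSpace 𝕜 X]
    (A S : Set X) : Prop :=
  ∃ (f : X →L[𝕜] 𝕜) (ε : ℝ), 0 < ε ∧ S = Slice 𝕜 A f ε

/-- A countable family `V` of subsets of `A` is determining for `A`:
`A` is contained in the closed convex hull of any `B ⊆ A` meeting every `V n`. -/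
def Determining {X : Type*} [SeminormedAddCommGroup X] [NormedSpace ℝ X]
    (A : Set X) (V : ℕ → Set X) : Prop :=
  ∀ B ⊆ A, (∀ n, (B ∩ V n).Nonempty) → A ⊆ closure (convexHull ℝ B)

/-- `A` is a slicely countably determined set: there is a determining sequence of
slices of `A`. -/
def IsSCD (𝕜 : Type*) [RCLike 𝕜] {X : Type*} [SeminormedAddCommGroup X] [NormedSpace ℝ X]
    [NormedSpace 𝕜 X] (A : Set X) : Prop :=
  ∃ S : ℕ → Set X, (∀ n, IsSlice 𝕜 A (S n)) ∧ Determining A S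

/-- The operator `T` satisfies the alternative Daugavet equation
`max_{|θ|=1} ‖Id + θT‖ = 1 + ‖T‖`. -/
def AlternativeDaugavetEquation (𝕜 : Type*) [RCLike 𝕜] {X : Type*} [NormedAddCommGroup X]
    [NormedSpace 𝕜 X] (T : X →L[𝕜] X) : Prop :=
  sSup ((fun θ : 𝕜 => ‖ContinuousLinearMap.id 𝕜 X + θ • T‖) '' {θ : 𝕜 | ‖θ‖ = 1}) = 1 + ‖T‖

/-- `X` has the alternative Daugavet property: every rank-one operator `x ↦ f(x) • y`
satisfies the alternative Daugavet equation. -/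
def AlternativeDaugavetProperty (𝕜 : Type*) [RCLike 𝕜] (X : Type*) [NormedAddCommGroup X]
    [NormedSpace 𝕜 X] : Prop :=
  ∀ (f : X →L[𝕜] 𝕜) (y : X), AlternativeDaugavetEquation 𝕜 (f.smulRight y)

section Helpers

variable {𝕜 : Type*} [RCLike 𝕜] {X : Type*} [NormedAddCommGroup X] [NormedSpace 𝕜 X]

lemma exists_rot (c : 𝕜) : ∃ μ : 𝕜, ‖μ‖ = 1 ∧ μ * c = (‖c‖ : 𝕜) := by
  by_cases hc : c = 0
  · exact ⟨1, norm_one, by simp [hc]⟩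
  · refine ⟨(‖c‖ : 𝕜) / c, ?_, ?_⟩
    · rw [norm_div, RCLike.norm_ofReal, abs_norm, div_self (norm_ne_zero_iff.2 hc)]
    · rw [div_mul_cancel₀ _ hc]

lemma sSup_re_image (f : X →L[𝕜] 𝕜) :
    sSup ((fun a => RCLike.re (f a)) '' Metric.closedBall (0 : X) 1) = ‖f‖ := by
  have hne : ((fun a => RCLike.re (f a)) '' Metric.closedBall (0 : X) 1).Nonempty :=
    ⟨RCLike.re (f 0), ⟨0, by simp, rfl⟩⟩
  refine IsLUB.csSup_eq ⟨?_, ?_⟩ hne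
  · rintro r ⟨a, ha, rfl⟩
    have h1 : ‖a‖ ≤ 1 := by simpa using mem_closedBall_zero_iff.1 ha
    calc RCLike.re (f a) ≤ ‖f a‖ := RCLike.re_le_norm _
      _ ≤ ‖f‖ * ‖a‖ := f.le_opNorm a
      _ ≤ ‖f‖ := mul_le_of_le_one_right (norm_nonneg _) h1
  · intro b hb
    have hb0 : (0 : ℝ) ≤ b := by
      have : RCLike.re (f 0) ≤ b := hb ⟨0, by simp, rfl⟩
      simpa using this
    refine f.opNorm_le_bound hb0 (fun a => ?_)
    by_cases ha : a = 0
    · simp [ha]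
    · have hna : (0 : ℝ) < ‖a‖ := norm_pos_iff.2 ha
      set u : X := ((‖a‖ : 𝕜))⁻¹ • a with hu
      have hnu : ‖u‖ = 1 := by
        rw [hu, norm_smul, norm_inv, RCLike.norm_ofReal, abs_norm,
          inv_mul_cancel₀ (ne_of_gt hna)]
      obtain ⟨μ, hμ1, hμ2⟩ := exists_rot (f u)
      have hmem : μ • u ∈ Metric.closedBall (0 : X) 1 := by
        rw [mem_closedBall_zero_iff, norm_smul, hμ1, hnu, one_mul]
      have h1 : RCLike.re (f (μ • u)) ≤ b := hb ⟨μ • u, hmem, rfl⟩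
      have h2 : RCLike.re (f (μ • u)) = ‖f u‖ := by
        rw [map_smul, smul_eq_mul, hμ2, RCLike.ofReal_re]
      have h3 : ‖f u‖ ≤ b := h2 ▸ h1
      have h4 : f a = (‖a‖ : 𝕜) • f u := by
        rw [hu, map_smul, smul_smul, mul_inv_cancel₀, one_smul]
        exact RCLike.ofReal_ne_zero.2 (ne_of_gt hna)
      rw [h4, norm_smul, RCLike.norm_ofReal, abs_norm, mul_comm]
      exact mul_le_mul_of_nonneg_right h3 (le_of_lt hna)

/-- Key lemma: under the ADP, for every slice of the unit ball, every unit vector `z` and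
every `η > 0`, there is a point `a` of the slice and a unimodular `θ` with
`‖z + θ • a‖ > 2 - η`. -/
lemma key_lemma (hADP : AlternativeDaugavetProperty 𝕜 X) (g : X →L[𝕜] 𝕜) {β : ℝ} (hβ : 0 < β)
    {z : X} (hz : ‖z‖ = 1) {η : ℝ} (hη : 0 < η) :
    ∃ a ∈ Slice 𝕜 (Metric.closedBall (0 : X) 1) g β, ∃ θ : 𝕜, ‖θ‖ = 1 ∧
      2 - η < ‖z + θ • a‖ := by
  by_cases hg : g = 0
  · refine ⟨z, ⟨mem_closedBall_zero_iff.2 hz.le, ?_⟩, 1, norm_one, ?_⟩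
    · rw [sSup_re_image, hg]
      simp [hβ]
    · rw [one_smul]
      have h2 : z + z = (2 : 𝕜) • z := (two_smul 𝕜 z).symm
      rw [h2, norm_smul, hz]
      have h3 : ‖(2 : 𝕜)‖ = 2 := by simp
      rw [h3]; linarith
  · have hG : (0 : ℝ) < ‖g‖ := norm_pos_iff.2 hg
    set G := ‖g‖ with hGdef
    set δ := min (min β (η * G)) (min η G) / 2 with hδdef
    have hδpos : 0 < δ := by
      apply div_pos _ two_pos
      exact lt_min (lt_min hβ (mul_pos hη hG)) (lt_min hη hG)
    have hδβ : δ < β := by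
      have : min (min β (η * G)) (min η G) ≤ β := le_trans (min_le_left _ _) (min_le_left _ _)
      rw [hδdef]; linarith
    have hδηG : 2 * δ ≤ η * G := by
      have : min (min β (η * G)) (min η G) ≤ η * G :=
        le_trans (min_le_left _ _) (min_le_right _ _)
      rw [hδdef]; linarith
    have hδη : 2 * δ ≤ η := by
      have : min (min β (η * G)) (min η G) ≤ η := le_trans (min_le_right _ _) (min_le_left _ _)
      rw [hδdef]; linarith
    have hδG : δ < G := by
      have : min (min β (η * G)) (min η G) ≤ G := le_trans (min_le_right _ _) (min_le_right _ _)
      rw [hδdef]; linarith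
    have hT := hADP g z
    unfold AlternativeDaugavetEquation at hT
    have hTnorm : ‖g.smulRight z‖ = G := by
      rw [ContinuousLinearMap.norm_smulRight_apply, hz, mul_one]
    have hne : ((fun θ : 𝕜 => ‖ContinuousLinearMap.id 𝕜 X + θ • g.smulRight z‖) ''
        {θ : 𝕜 | ‖θ‖ = 1}).Nonempty := ⟨_, ⟨1, by simp, rfl⟩⟩
    have hlt : 1 + G - δ < sSup ((fun θ : 𝕜 => ‖ContinuousLinearMap.id 𝕜 X +
        θ • g.smulRight z‖) '' {θ : 𝕜 | ‖θ‖ = 1}) := by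
      rw [hT, hTnorm]; linarith
    obtain ⟨r, ⟨θ₀, hθ₀, rfl⟩, hr⟩ := exists_lt_of_lt_csSup hne hlt
    have hθ₀1 : ‖θ₀‖ = 1 := hθ₀
    have hθ₀0 : θ₀ ≠ 0 := by
      intro h; rw [h, norm_zero] at hθ₀1; norm_num at hθ₀1
    obtain ⟨u, hu1, hu2⟩ := ContinuousLinearMap.exists_lt_apply_of_lt_opNorm _ hr
    have happ : (ContinuousLinearMap.id 𝕜 X + θ₀ • g.smulRight z) u = u + (θ₀ * g u) • z := by
      simp [ContinuousLinearMap.smulRight_apply, smul_smul]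
    rw [happ] at hu2
    set t := ‖g u‖ with htdef
    have htG : t ≤ G := by
      calc ‖g u‖ ≤ ‖g‖ * ‖u‖ := g.le_opNorm u
        _ ≤ G := mul_le_of_le_one_right (norm_nonneg _) hu1.le
    have hnorm_coeff : ‖(θ₀ * g u) • z‖ = t := by
      rw [norm_smul, norm_mul, hθ₀1, one_mul, hz, mul_one]
    have htlb : G - δ < t := by
      have h1 : ‖u + (θ₀ * g u) • z‖ ≤ ‖u‖ + ‖(θ₀ * g u) • z‖ := norm_add_le _ _
      rw [hnorm_coeff] at h1
      linarith [hu1.le]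
    have htpos : 0 < t := by linarith
    obtain ⟨ν, hν1, hν2⟩ := exists_rot (g u)
    set a := ν • u with hadef
    have hnau : ‖a‖ = ‖u‖ := by rw [hadef, norm_smul, hν1, one_mul]
    have haball : a ∈ Metric.closedBall (0 : X) 1 :=
      mem_closedBall_zero_iff.2 (by rw [hnau]; exact hu1.le)
    have hga : g a = (t : 𝕜) := by rw [hadef, map_smul, smul_eq_mul, hν2]
    have haS : a ∈ Slice 𝕜 (Metric.closedBall (0 : X) 1) g β := by
      refine ⟨haball, ?_⟩
      rw [sSup_re_image, hga, RCLike.ofReal_re]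
      show G - β < t
      linarith
    have key2 : a + (θ₀ * (t : 𝕜)) • z = ν • (u + (θ₀ * g u) • z) := by
      rw [smul_add, smul_smul]
      congr 2
      rw [mul_left_comm, hν2]
    have hbig : 1 + G - δ < ‖a + (θ₀ * (t : 𝕜)) • z‖ := by
      rw [key2, norm_smul, hν1, one_mul]; exact hu2
    have hwne : a + (θ₀ * (t : 𝕜)) • z ≠ 0 := by
      intro h; rw [h, norm_zero] at hbig; linarith
    obtain ⟨h, hh1, hh2⟩ := exists_dual_vector 𝕜 _ (norm_ne_zero_iff.2 hwne)
    have hcap : ∀ w : X, RCLike.re (h w) ≤ ‖w‖ := by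
      intro w
      calc RCLike.re (h w) ≤ ‖h w‖ := RCLike.re_le_norm _
        _ ≤ ‖h‖ * ‖w‖ := h.le_opNorm w
        _ = ‖w‖ := by rw [hh1, one_mul]
    have hsum : RCLike.re (h a) + RCLike.re (h ((θ₀ * (t : 𝕜)) • z)) =
        ‖a + (θ₀ * (t : 𝕜)) • z‖ := by
      rw [← map_add, ← map_add, hh2, RCLike.ofReal_re]
    have hcapa : RCLike.re (h a) ≤ 1 := le_trans (hcap a) (by rw [hnau]; exact hu1.le)
    have hcapz : RCLike.re (h ((θ₀ * (t : 𝕜)) • z)) ≤ t := by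
      have := hcap ((θ₀ * (t : 𝕜)) • z)
      rwa [norm_smul, norm_mul, hθ₀1, one_mul, RCLike.norm_ofReal, abs_of_pos htpos, hz,
        mul_one] at this
    have hra : 1 - δ < RCLike.re (h a) := by linarith
    have hrz' : G - δ < RCLike.re (h ((θ₀ * (t : 𝕜)) • z)) := by linarith
    have hfactor : RCLike.re (h ((θ₀ * (t : 𝕜)) • z)) = t * RCLike.re (h (θ₀ • z)) := by
      have he : (θ₀ * (t : 𝕜)) • z = (t : 𝕜) • (θ₀ • z) := by
        rw [smul_smul, mul_comm]
      rw [he, map_smul, smul_eq_mul, RCLike.re_ofReal_mul]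
    have hrz : 1 - η / 2 < RCLike.re (h (θ₀ • z)) := by
      rw [hfactor] at hrz'
      have h1 : (G - δ) / t < RCLike.re (h (θ₀ • z)) := (div_lt_iff₀ htpos).2 (by linarith)
      have h2 : 1 - η / 2 ≤ (G - δ) / t := by
        rw [le_div_iff₀ htpos]
        nlinarith
      linarith
    refine ⟨a, haS, θ₀⁻¹, by rw [norm_inv, hθ₀1, inv_one], ?_⟩
    have heq : ‖z + θ₀⁻¹ • a‖ = ‖θ₀ • z + a‖ := by
      have h1 : θ₀ • (z + θ₀⁻¹ • a) = θ₀ • z + a := by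
        rw [smul_add, smul_inv_smul₀ hθ₀0]
      calc ‖z + θ₀⁻¹ • a‖ = ‖θ₀ • (z + θ₀⁻¹ • a)‖ := by rw [norm_smul, hθ₀1, one_mul]
        _ = ‖θ₀ • z + a‖ := by rw [h1]
    rw [heq]
    have h3 : RCLike.re (h (θ₀ • z + a)) = RCLike.re (h (θ₀ • z)) + RCLike.re (h a) := by
      rw [map_add, map_add]
    have h4 := hcap (θ₀ • z + a)
    linarith

end Helpers

lemma exists_seq {X : Type*} [AddCommGroup X] {𝕜 : Type*} [Field 𝕜] [Module 𝕜 X]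
    (pick : ℕ → X → X × 𝕜) (x : X) :
    ∃ (v : ℕ → X) (a : ℕ → X) (θ : ℕ → 𝕜), v 0 = x ∧
      (∀ n, a n = (pick n (v n)).1) ∧ (∀ n, θ n = (pick n (v n)).2) ∧
      (∀ n, v (n + 1) = v n + θ n • a n) :=
  ⟨fun n => Nat.rec x (fun m w => w + (pick m w).2 • (pick m w).1) n,
    fun n => (pick n (Nat.rec x (fun m w => w + (pick m w).2 • (pick m w).1) n)).1,
    fun n => (pick n (Nat.rec x (fun m w => w + (pick m w).2 • (pick m w).1) n)).2,
    rfl, fun _ => rfl, fun _ => rfl, fun _ => rfl⟩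

set_option maxHeartbeats 2000000 in

/-- A Banach space with the alternative Daugavet property whose closed
unit ball is an SCD set is lush: for all norm-one `x, y` and `ε > 0` there is a norm-one
functional `f` with `Re f(x) > 1 - ε` and
`dist (y, conv {θ • z : |θ| = 1, ‖z‖ ≤ 1, Re f(z) > 1 - ε}) < ε`. -/
theorem statement15 {𝕜 : Type*} [RCLike 𝕜] {X : Type*} [NormedAddCommGroup X]
    [NormedSpace ℝ X] [NormedSpace 𝕜 X] [IsScalarTower ℝ 𝕜 X] [CompleteSpace X]
    (hADP : AlternativeDaugavetProperty 𝕜 X)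
    (hSCD : IsSCD 𝕜 (Metric.closedBall (0 : X) 1)) :
    ∀ x y : X, ‖x‖ = 1 → ‖y‖ = 1 → ∀ ε : ℝ, 0 < ε →
      ∃ f : X →L[𝕜] 𝕜, ‖f‖ = 1 ∧ 1 - ε < RCLike.re (f x) ∧
        Metric.infDist y (convexHull ℝ
          {w : X | ∃ (θ : 𝕜) (z : X), ‖θ‖ = 1 ∧ ‖z‖ ≤ 1 ∧
            1 - ε < RCLike.re (f z) ∧ w = θ • z}) < ε := by
  intro x y hx hy ε hε
  obtain ⟨S, hSlice, hDet⟩ := hSCD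
  set ε' : ℝ := min ε 1 / 2 with hε'def
  have hε'pos : 0 < ε' := by
    have := lt_min hε one_pos
    rw [hε'def]; linarith
  have hε'half : ε' ≤ 1 / 2 := by
    have : min ε 1 ≤ 1 := min_le_right _ _
    rw [hε'def]; linarith
  have hε'ε : ε' < ε := by
    have h1 : min ε 1 ≤ ε := min_le_left _ _
    rw [hε'def]; linarith
  set η : ℕ → ℝ := fun n => ε' / (2 ^ (n + 1) * ((n : ℝ) + 2)) with hηdef
  have hηpos : ∀ n, 0 < η n := fun n => div_pos hε'pos (by positivity)
  have hηle : ∀ n, η n ≤ ε' := by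
    intro n
    apply div_le_self hε'pos.le
    have h1 : (2 : ℝ) ≤ 2 ^ (n + 1) := by
      calc (2:ℝ) = 2 ^ 1 := (pow_one 2).symm
        _ ≤ 2 ^ (n + 1) := pow_le_pow_right₀ (by norm_num) (by omega)
    nlinarith [Nat.cast_nonneg (α := ℝ) n]
  -- one step of the construction
  have hpick : ∀ (n : ℕ) (w : X), ∃ p : X × 𝕜, w ≠ 0 →
      p.1 ∈ S n ∧ ‖p.2‖ = 1 ∧ ‖p.1‖ ≤ 1 ∧
        (‖w‖ + 1) * (1 - η n) < ‖w + p.2 • p.1‖ := by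
    intro n w
    by_cases hw : w = 0
    · exact ⟨(0, 0), fun h => (h hw).elim⟩
    · obtain ⟨g, β, hβ, hSeq⟩ := hSlice n
      have hwpos : 0 < ‖w‖ := norm_pos_iff.2 hw
      set z : X := ((‖w‖ : 𝕜))⁻¹ • w with hzdef
      have hz : ‖z‖ = 1 := by
        rw [hzdef, norm_smul, norm_inv, RCLike.norm_ofReal, abs_norm,
          inv_mul_cancel₀ hwpos.ne']
      obtain ⟨a, haS, θ, hθ, hlt⟩ := key_lemma hADP g hβ hz (hηpos n)
      have hanorm : ‖a‖ ≤ 1 := mem_closedBall_zero_iff.1 haS.1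
      refine ⟨(a, θ), fun _ => ⟨by rw [hSeq]; exact haS, hθ, hanorm, ?_⟩⟩
      have hηn1 : η n < 2 := lt_of_le_of_lt (le_trans (hηle n) hε'half) (by norm_num)
      have hwne : z + θ • a ≠ 0 := by
        intro h
        rw [h, norm_zero] at hlt
        linarith
      obtain ⟨h, hh1, hh2⟩ := exists_dual_vector 𝕜 _ (norm_ne_zero_iff.2 hwne)
      have hcap : ∀ u : X, RCLike.re (h u) ≤ ‖u‖ := by
        intro u
        calc RCLike.re (h u) ≤ ‖h u‖ := RCLike.re_le_norm _
          _ ≤ ‖h‖ * ‖u‖ := h.le_opNorm u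
          _ = ‖u‖ := by rw [hh1, one_mul]
      have hsum : RCLike.re (h z) + RCLike.re (h (θ • a)) = ‖z + θ • a‖ := by
        rw [← map_add, ← map_add, hh2, RCLike.ofReal_re]
      have hcapz : RCLike.re (h z) ≤ 1 := le_trans (hcap z) (le_of_eq hz)
      have hcapa : RCLike.re (h (θ • a)) ≤ 1 :=
        le_trans (hcap _) (by rw [norm_smul, hθ, one_mul]; exact hanorm)
      have hrz : 1 - η n < RCLike.re (h z) := by linarith
      have hra : 1 - η n < RCLike.re (h (θ • a)) := by linarith
      have hwz : h w = (‖w‖ : 𝕜) * h z := by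
        have : w = (‖w‖ : 𝕜) • z := by
          rw [hzdef, smul_smul, mul_inv_cancel₀ (RCLike.ofReal_ne_zero.2 hwpos.ne'),
            one_smul]
        rw [this, map_smul, smul_eq_mul]
        congr 1
        rw [← this]
      have hrew : RCLike.re (h w) = ‖w‖ * RCLike.re (h z) := by
        rw [hwz, RCLike.re_ofReal_mul]
      have hlow : RCLike.re (h (w + θ • a)) ≤ ‖w + θ • a‖ := hcap _
      have hre2 : RCLike.re (h (w + θ • a)) = RCLike.re (h w) + RCLike.re (h (θ • a)) := by
        rw [map_add, map_add]
      have e1 : ‖w‖ * (1 - η n) ≤ ‖w‖ * RCLike.re (h z) :=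
        mul_le_mul_of_nonneg_left (by linarith) (norm_nonneg w)
      have : (‖w‖ + 1) * (1 - η n) = ‖w‖ * (1 - η n) + (1 - η n) := by ring
      linarith [hrew ▸ e1]
  choose pick hpick using hpick
  -- the sequence v of partial sums, and the chosen points/rotations
  obtain ⟨v, a, θ, hv0, hadef, hθdef, hvs⟩ := exists_seq pick x
  -- growth of the norms
  have hbound : ∀ n : ℕ, ((n : ℝ)) + 1 - ε' * (1 - (1 / 2 : ℝ) ^ n) ≤ ‖v n‖ := by
    intro n
    induction n with
    | zero => simp [hv0, hx]
    | succ n ih =>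
      rw [show ((n + 1 : ℕ) : ℝ) = (n : ℝ) + 1 from by push_cast; ring]
      have hq0 : (0 : ℝ) < (1 / 2 : ℝ) ^ n := by positivity
      have hq1 : (1 / 2 : ℝ) ^ n ≤ 1 := pow_le_one₀ (by norm_num) (by norm_num)
      have hn0 : (0 : ℝ) ≤ (n : ℝ) := Nat.cast_nonneg n
      have hvn0 : v n ≠ 0 := by
        intro h
        rw [h, norm_zero] at ih
        nlinarith
      obtain ⟨-, -, -, hstep⟩ := hpick n (v n) hvn0
      rw [← hadef n, ← hθdef n, ← hvs n] at hstep
      have hηn : η n * (2 ^ (n + 1) * ((n : ℝ) + 2)) = ε' := by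
        rw [hηdef]
        field_simp
      have h2p : (0 : ℝ) < (2 : ℝ) ^ (n + 1) := by positivity
      have hqq : (1 / 2 : ℝ) ^ (n + 1) * (2 : ℝ) ^ (n + 1) = 1 := by
        rw [← mul_pow]; norm_num
      have hηn2 : η n * ((n : ℝ) + 2) = ε' * (1 / 2 : ℝ) ^ (n + 1) := by
        have := hηn
        nlinarith [hqq]
      have hqsucc : (1 / 2 : ℝ) ^ (n + 1) = (1 / 2 : ℝ) ^ n * (1 / 2) := pow_succ _ _
      have hA1 : (n : ℝ) + 2 - ε' * (1 - (1 / 2 : ℝ) ^ n) ≤ ‖v n‖ + 1 := by linarith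
      have hApos : (0 : ℝ) ≤ (n : ℝ) + 2 - ε' * (1 - (1 / 2 : ℝ) ^ n) := by nlinarith
      have hη01 : 0 ≤ 1 - η n := by
        have := hηle n
        linarith
      have hstep2 : ((n : ℝ) + 2 - ε' * (1 - (1 / 2 : ℝ) ^ n)) * (1 - η n) ≤
          (‖v n‖ + 1) * (1 - η n) := mul_le_mul_of_nonneg_right hA1 hη01
      have hfinal : ((n : ℝ) + 1 : ℝ) + 1 - ε' * (1 - (1 / 2 : ℝ) ^ (n + 1)) ≤
          ((n : ℝ) + 2 - ε' * (1 - (1 / 2 : ℝ) ^ n)) * (1 - η n) := by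
        have hexp : ((n : ℝ) + 2 - ε' * (1 - (1 / 2 : ℝ) ^ n)) * (1 - η n) =
            (n : ℝ) + 2 - ε' * (1 - (1 / 2 : ℝ) ^ n) - η n * ((n : ℝ) + 2)
              + η n * (ε' * (1 - (1 / 2 : ℝ) ^ n)) := by ring
        have hη0 : 0 ≤ η n := (hηpos n).le
        have hnonneg : 0 ≤ η n * (ε' * (1 - (1 / 2 : ℝ) ^ n)) := by
          apply mul_nonneg hη0 (mul_nonneg hε'pos.le (by linarith))
        rw [hexp, hηn2]
        push_cast
        nlinarith
      calc ((n : ℝ) + 1 : ℝ) + 1 - ε' * (1 - (1 / 2 : ℝ) ^ (n + 1))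
          ≤ ((n : ℝ) + 2 - ε' * (1 - (1 / 2 : ℝ) ^ n)) * (1 - η n) := hfinal
        _ ≤ (‖v n‖ + 1) * (1 - η n) := hstep2
        _ ≤ ‖v (n + 1)‖ := hstep.le
  have hvne : ∀ n, v n ≠ 0 := by
    intro n h
    have := hbound n
    rw [h, norm_zero] at this
    have hq1 : (1 / 2 : ℝ) ^ n ≤ 1 := pow_le_one₀ (by norm_num) (by norm_num)
    have hq0 : (0 : ℝ) ≤ (1 / 2 : ℝ) ^ n := by positivity
    have hn0 : (0 : ℝ) ≤ (n : ℝ) := Nat.cast_nonneg n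
    nlinarith [mul_le_mul_of_nonneg_left (by linarith : (1 - (1 / 2 : ℝ) ^ n) ≤ 1) hε'pos.le]
  have haS : ∀ n, a n ∈ S n := fun n => (hadef n) ▸ (hpick n (v n) (hvne n)).1
  have hθ1 : ∀ n, ‖θ n‖ = 1 := fun n => (hθdef n) ▸ (hpick n (v n) (hvne n)).2.1
  have hanorm : ∀ n, ‖a n‖ ≤ 1 := fun n => (hadef n) ▸ (hpick n (v n) (hvne n)).2.2.1
  have haball : ∀ n, a n ∈ Metric.closedBall (0 : X) 1 :=
    fun n => mem_closedBall_zero_iff.2 (hanorm n)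
  -- use determining property
  have hyB : y ∈ closure (convexHull ℝ (Set.range a)) := by
    apply hDet (Set.range a) ?_ ?_ (mem_closedBall_zero_iff.2 hy.le)
    · rintro - ⟨n, rfl⟩; exact haball n
    · intro n; exact ⟨a n, ⟨n, rfl⟩, haS n⟩
  obtain ⟨p, hp, hdist⟩ := Metric.mem_closure_iff.1 hyB ε' hε'pos
  rw [convexHull_eq_union_convexHull_finite_subsets] at hp
  simp only [Set.mem_iUnion] at hp
  obtain ⟨t, hts, hpt⟩ := hp
  have hidx : ∀ e ∈ t, ∃ i, a i = e := fun e he => hts he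
  choose idx hidxeq using hidx
  obtain ⟨N, hidxlt⟩ : ∃ N : ℕ, ∀ e (he : e ∈ t), idx e he < N := by
    refine ⟨(t.attach.sup fun e => idx e.1 e.2) + 1, fun e he => ?_⟩
    exact Nat.lt_succ_of_le (Finset.le_sup (f := fun (e : {x // x ∈ t}) => idx e.1 e.2) (Finset.mem_attach t ⟨e, he⟩))
  obtain ⟨f, hf1, hf2⟩ := exists_dual_vector 𝕜 (v N) (norm_ne_zero_iff.2 (hvne N))
  have hcap : ∀ u : X, RCLike.re (f u) ≤ ‖u‖ := by
    intro u
    calc RCLike.re (f u) ≤ ‖f u‖ := RCLike.re_le_norm _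
      _ ≤ ‖f‖ * ‖u‖ := f.le_opNorm u
      _ = ‖u‖ := by rw [hf1, one_mul]
  have hvsum : ∀ n, v n = x + ∑ i ∈ Finset.range n, θ i • a i := by
    intro n
    induction n with
    | zero => simp [hv0]
    | succ n ih => rw [hvs n, ih, Finset.sum_range_succ, add_assoc]
  have hre : RCLike.re (f (v N)) = ‖v N‖ := by rw [hf2, RCLike.ofReal_re]
  have hlarge : (N : ℝ) + 1 - ε' < RCLike.re (f (v N)) := by
    rw [hre]
    have h1 := hbound N
    have h2 : 0 < (1 / 2 : ℝ) ^ N := by positivity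
    nlinarith [mul_pos hε'pos h2]
  have hsplit : RCLike.re (f (v N)) =
      RCLike.re (f x) + ∑ i ∈ Finset.range N, RCLike.re (f (θ i • a i)) := by
    rw [hvsum N, map_add, map_sum, map_add, map_sum]
  have hterm_le : ∀ i, RCLike.re (f (θ i • a i)) ≤ 1 := fun i =>
    le_trans (hcap _) (by rw [norm_smul, hθ1 i, one_mul]; exact hanorm i)
  have hxle : RCLike.re (f x) ≤ 1 := le_trans (hcap x) (le_of_eq hx)
  have hsum_le : ∑ i ∈ Finset.range N, RCLike.re (f (θ i • a i)) ≤ (N : ℝ) := by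
    calc ∑ i ∈ Finset.range N, RCLike.re (f (θ i • a i))
        ≤ ∑ _i ∈ Finset.range N, (1 : ℝ) := Finset.sum_le_sum fun i _ => hterm_le i
      _ = (N : ℝ) := by simp
  have hfx : 1 - ε' < RCLike.re (f x) := by linarith
  have hterm_big : ∀ i, i < N → 1 - ε' < RCLike.re (f (θ i • a i)) := by
    intro i hi
    have hmem : i ∈ Finset.range N := Finset.mem_range.2 hi
    have hsplit2 : RCLike.re (f (θ i • a i)) +
        ∑ j ∈ (Finset.range N).erase i, RCLike.re (f (θ j • a j)) =
        ∑ j ∈ Finset.range N, RCLike.re (f (θ j • a j)) :=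
      Finset.add_sum_erase _ (fun j => RCLike.re (f (θ j • a j))) hmem
    have herase_le : ∑ j ∈ (Finset.range N).erase i, RCLike.re (f (θ j • a j)) ≤
        ((N : ℝ) - 1) := by
      calc ∑ j ∈ (Finset.range N).erase i, RCLike.re (f (θ j • a j))
          ≤ ∑ _j ∈ (Finset.range N).erase i, (1 : ℝ) :=
            Finset.sum_le_sum fun j _ => hterm_le j
        _ = (((Finset.range N).erase i).card : ℝ) := by simp
        _ = ((N : ℝ) - 1) := by
            rw [Finset.card_erase_of_mem hmem, Finset.card_range]
            have hN1 : 1 ≤ N := Nat.succ_le_of_lt (Nat.pos_of_ne_zero (by omega))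
            push_cast [Nat.cast_sub hN1]
            ring
    linarith
  refine ⟨f, hf1, by linarith, ?_⟩
  have hθne : ∀ i, θ i ≠ 0 := fun i => by
    intro h
    have := hθ1 i
    rw [h, norm_zero] at this
    norm_num at this
  have hsub : (↑t : Set X) ⊆ {w : X | ∃ (θ' : 𝕜) (z : X), ‖θ'‖ = 1 ∧ ‖z‖ ≤ 1 ∧
      1 - ε < RCLike.re (f z) ∧ w = θ' • z} := by
    intro e he
    set i := idx e he with hi
    refine ⟨(θ i)⁻¹, θ i • a i, ?_, ?_, ?_, ?_⟩
    · rw [norm_inv, hθ1 i, inv_one]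
    · rw [norm_smul, hθ1 i, one_mul]; exact hanorm i
    · have := hterm_big i (hidxlt e he)
      linarith
    · rw [inv_smul_smul₀ (hθne i), hidxeq e he]
  have hpmem : p ∈ convexHull ℝ {w : X | ∃ (θ' : 𝕜) (z : X), ‖θ'‖ = 1 ∧ ‖z‖ ≤ 1 ∧
      1 - ε < RCLike.re (f z) ∧ w = θ' • z} := convexHull_mono hsub hpt
  calc Metric.infDist y (convexHull ℝ {w : X | ∃ (θ' : 𝕜) (z : X), ‖θ'‖ = 1 ∧ ‖z‖ ≤ 1 ∧
      1 - ε < RCLike.re (f z) ∧ w = θ' • z}) ≤ dist y p :=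
        Metric.infDist_le_dist_of_mem hpmem
    _ < ε' := hdist
    _ < ε := hε'ε
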